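/- arXiv:2005.08955 — 2 statements merged into one kernel-verified Lean document; each statement's English description precedes it below -/
import Mathlib

section
/- Let R be a commutative unitary ring whose multiplicative semigroup has finite Erdős-Burgess constant. Then every maximal ideal M of R has finite index, i.e., R/M is a finite field. -/
/-- Product of the nonempty list `a :: l` in a semigroup. -/
def sprod {α : Type*} [Mul α] (a : α) (l : List α) : α := l.foldl (· * ·) a

/-- A list is idempotent-product free if no nonempty sublist has idempotent product. -/
def IdemProdFree {α : Type*} [Mul α] (l : List α) : Prop :=
  ∀ (a : α) (t : List α), (a :: t).Sublist l → ¬ IsIdempotentElem (sprod a t)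

/-- The Erdős–Burgess constant of a (commutative) semigroup, as an extended natural:
the supremum of `|T| + 1` over all idempotent-product free sequences `T`. -/
noncomputable def EB (α : Type*) [Mul α] : ℕ∞ :=
  ⨆ l ∈ {l : List α | IdemProdFree l}, ((l.length : ℕ∞) + 1)

lemma sprod_eq_prod {M : Type*} [Monoid M] (a : M) (l : List M) :
    sprod a l = (a :: l).prod := by
  rw [List.prod_eq_foldl, List.foldl_cons, one_mul]; rfl

lemma map_sprod {M N : Type*} [Monoid M] [Monoid N] (f : M →* N) (a : M) (l : List M) :
    f (sprod a l) = sprod (f a) (l.map f) := by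
  rw [sprod_eq_prod, sprod_eq_prod, ← List.map_cons, map_list_prod]

lemma idemProdFree_of_map {M N : Type*} [Monoid M] [Monoid N] (f : M →* N) (l : List M)
    (h : IdemProdFree (l.map f)) : IdemProdFree l := by
  intro a t hsub hid
  refine h (f a) (t.map f) ?_ ?_
  · simpa using hsub.map f
  · rw [← map_sprod]
    unfold IsIdempotentElem at hid ⊢
    rw [← map_mul, hid]

lemma exists_good (K : Type*) [Field K] [Infinite K] (n : ℕ) :
    ∃ l : List K, l.length = n ∧
      ∀ t : List K, t.Sublist l → t.prod ≠ 0 ∧ (t ≠ [] → t.prod ≠ 1) := by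
  classical
  induction n with
  | zero =>
    exact ⟨[], rfl, fun t ht => by simp [List.sublist_nil.mp ht]⟩
  | succ n ih =>
    obtain ⟨l, hlen, hl⟩ := ih
    obtain ⟨a, ha⟩ := Infinite.exists_notMem_finset
      (insert (0 : K) ((l.sublists.map (fun t => (t.prod)⁻¹)).toFinset))
    have ha0 : a ≠ 0 := by rintro rfl; exact ha (Finset.mem_insert_self 0 _)
    have hainv : ∀ t : List K, t.Sublist l → a ≠ (t.prod)⁻¹ := by
      intro t ht heq
      exact ha (Finset.mem_insert_of_mem (by
        rw [List.mem_toFinset, List.mem_map]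
        exact ⟨t, List.mem_sublists.mpr ht, heq.symm⟩))
    refine ⟨a :: l, by simp [hlen], ?_⟩
    intro t ht
    rcases List.sublist_cons_iff.mp ht with h1 | ⟨r, rfl, hr⟩
    · exact hl t h1
    · have hrprod := (hl r hr).1
      constructor
      · simp only [List.prod_cons]
        exact mul_ne_zero ha0 hrprod
      · intro _ h1
        rw [List.prod_cons] at h1
        exact hainv r hr (eq_inv_of_mul_eq_one_left h1)

theorem stmt_10 (R : Type*) [CommRing R] (h : EB R ≠ ⊤) :
    ∀ M : Ideal R, M.IsMaximal → Finite (R ⧸ M) := by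
  intro M hM
  by_contra hfin
  rw [not_finite_iff_infinite] at hfin
  letI : Field (R ⧸ M) := Ideal.Quotient.field M
  obtain ⟨n, hn⟩ := WithTop.ne_top_iff_exists.mp h
  -- build a good list in the quotient of length n
  obtain ⟨l0, hlen, hprop⟩ := exists_good (R ⧸ M) n
  have hsurj : Function.Surjective (Ideal.Quotient.mk M) := Ideal.Quotient.mk_surjective
  -- lift it
  let g : R ⧸ M → R := fun k => (hsurj k).choose
  have hg : ∀ k, Ideal.Quotient.mk M (g k) = k := fun k => (hsurj k).choose_spec
  let l : List R := l0.map g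
  have hmap : l.map (Ideal.Quotient.mk M) = l0 := by
    simp [l, List.map_map, Function.comp_def, hg]
  have hfree0 : IdemProdFree l0 := by
    intro a t hsub hid
    rw [sprod_eq_prod] at hid
    rcases IsIdempotentElem.iff_eq_zero_or_one.mp hid with h0 | h1
    · exact (hprop _ hsub).1 h0
    · exact (hprop _ hsub).2 (by simp) h1
  have hfree : IdemProdFree l :=
    idemProdFree_of_map (Ideal.Quotient.mk M : R →+* R ⧸ M).toMonoidHom l (hmap ▸ hfree0)
  have hle : ((l.length : ℕ∞) + 1) ≤ EB R := by
    have := le_iSup₂ (f := fun (l : List R) (_ : l ∈ {l : List R | IdemProdFree l}) =>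
      ((l.length : ℕ∞) + 1)) l hfree
    exact this
  have hlenl : l.length = n := by simp [l, hlen]
  rw [hlenl, ← hn] at hle
  exact absurd hle (fun hc => lt_irrefl _ ((ENat.add_one_le_iff (ENat.coe_ne_top n)).mp hc))
end

section
/- Let R be a commutative Noetherian unitary ring. Then the Erdős-Burgess constant of the multiplicative semigroup of R is finite if and only if R is finite. -/
/-!
A constant sequence `x, …, x` of length `n` has only the powers `x ^ k`, `1 ≤ k ≤ n`, as
products of subsequences. So if `EB R` is finite, say `n`, then `x ^ N` is idempotent for every
`x`, where `N = n!`. In a domain this leaves only `0` and the `N`-th roots of unity, so every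
quotient of `R` by a minimal prime is finite. A Noetherian ring has finitely many minimal primes,
and a power of their product lies in the nilpotent nilradical, so `R` itself is finite.

Conversely, in a finite monoid `x ^ N` is idempotent for a uniform `N > 0`, so an
idempotent-product free sequence contains each element fewer than `N` times.
-/

theorem EB_ne_top_iff {α : Type*} [Mul α] :
    EB α ≠ ⊤ ↔ ∃ n : ℕ, ∀ l : List α, IdemProdFree l → l.length < n := by
  constructor
  · intro h
    obtain ⟨n, hn⟩ := ENat.ne_top_iff_exists.mp h
    refine ⟨n, fun l hl => ?_⟩
    have hle : (l.length : ℕ∞) + 1 ≤ EB α :=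
      le_iSup₂ (f := fun l _ => (l.length : ℕ∞) + 1) l hl
    rw [← hn] at hle
    exact_mod_cast (ENat.add_one_le_iff (ENat.natCast_ne_top _)).mp hle
  · rintro ⟨n, hn⟩
    refine ne_top_of_le_ne_top (ENat.natCast_ne_top n) (iSup₂_le fun l hl => ?_)
    exact_mod_cast hn l hl

section Monoid

variable {M : Type*} [Monoid M]

theorem sprod_eq_mul_prod (a : M) (l : List M) : sprod a l = a * l.prod := by
  induction l generalizing a with
  | nil => simp [sprod]
  | cons b l ih => rw [sprod, List.foldl_cons, ← sprod, ih, List.prod_cons, mul_assoc]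

theorem sprod_replicate (x : M) (n : ℕ) : sprod x (List.replicate n x) = x ^ (n + 1) := by
  rw [sprod_eq_mul_prod, List.prod_replicate, pow_succ']

theorem exists_isIdempotentElem_pow_of_not_idemProdFree_replicate {x : M} {n : ℕ}
    (h : ¬ IdemProdFree (List.replicate n x)) :
    ∃ k, 0 < k ∧ k ≤ n ∧ IsIdempotentElem (x ^ k) := by
  simp only [IdemProdFree, not_forall, not_not] at h
  obtain ⟨a, t, hsub, hidem⟩ := h
  obtain ⟨k, hkn, hk⟩ := List.sublist_replicate_iff.mp hsub
  obtain ⟨j, rfl⟩ : ∃ j, k = j + 1 :=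
    Nat.exists_eq_succ_of_ne_zero (by rintro rfl; simp at hk)
  obtain ⟨rfl, rfl⟩ := List.cons.inj (hk.trans List.replicate_succ)
  exact ⟨j + 1, j.succ_pos, hkn, sprod_replicate a j ▸ hidem⟩

theorem IdemProdFree.count_lt [DecidableEq M] {l : List M} (hl : IdemProdFree l) {x : M}
    {k : ℕ} (hk : 0 < k) (hx : IsIdempotentElem (x ^ k)) : l.count x < k := by
  by_contra! hle
  obtain ⟨j, rfl⟩ : ∃ j, k = j + 1 := Nat.exists_eq_succ_of_ne_zero hk.ne'
  refine hl x (List.replicate j x) ?_ (sprod_replicate x j ▸ hx)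
  exact List.replicate_succ (a := x) ▸ List.replicate_sublist_iff.mpr hle

theorem pow_add_mul_eq_of_pow_add_eq {x : M} {a d : ℕ} (h : x ^ (a + d) = x ^ a) {m : ℕ}
    (hm : a ≤ m) (t : ℕ) : x ^ (m + d * t) = x ^ m := by
  obtain ⟨m, rfl⟩ := Nat.exists_eq_add_of_le hm
  induction t with
  | zero => simp
  | succ t ih =>
    calc x ^ (a + m + d * (t + 1)) = x ^ (a + d) * x ^ (m + d * t) := by rw [← pow_add]; ring_nf
      _ = x ^ (a + m) := by rw [h, ← pow_add, ← add_assoc, ih]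

theorem exists_isIdempotentElem_pow [Finite M] (x : M) :
    ∃ k, 0 < k ∧ IsIdempotentElem (x ^ k) := by
  obtain ⟨i, j, hij, hpow⟩ := Finite.exists_ne_map_eq_of_infinite fun i : ℕ => x ^ (i + 1)
  wlog hlt : i < j generalizing i j
  · exact this j i hij.symm hpow.symm (by omega)
  obtain ⟨d, rfl⟩ := Nat.exists_eq_add_of_lt hlt
  have hper : x ^ (i + 1 + (d + 1)) = x ^ (i + 1) := by rw [hpow]; ring_nf
  -- a multiple of the period `d + 1` that is at least the preperiod `i + 1`
  refine ⟨(d + 1) * (i + 1), by positivity, ?_⟩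
  rw [IsIdempotentElem, ← pow_add]
  exact pow_add_mul_eq_of_pow_add_eq hper (Nat.le_mul_of_pos_left _ d.succ_pos) (i + 1)

theorem exists_forall_isIdempotentElem_pow [Finite M] :
    ∃ N, 0 < N ∧ ∀ x : M, IsIdempotentElem (x ^ N) := by
  have := Fintype.ofFinite M
  choose k hk0 hk using exists_isIdempotentElem_pow (M := M)
  refine ⟨∏ x, k x, Finset.prod_pos fun x _ => hk0 x, fun x => ?_⟩
  obtain ⟨c, hc⟩ := Finset.dvd_prod_of_mem k (Finset.mem_univ x)
  rw [hc, pow_mul]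
  exact (hk x).pow c

theorem EB_ne_top_of_finite [Finite M] : EB M ≠ ⊤ := by
  classical
  have := Fintype.ofFinite M
  obtain ⟨N, hN, hidem⟩ := exists_forall_isIdempotentElem_pow (M := M)
  refine EB_ne_top_iff.mpr ⟨Fintype.card M * N + 1, fun l hl => Nat.lt_succ_of_le ?_⟩
  calc l.length = ∑ x ∈ l.toFinset, l.count x := (List.sum_toFinset_count_eq_length l).symm
    _ ≤ l.toFinset.card • N :=
      Finset.sum_le_card_nsmul _ _ _ fun x _ => (hl.count_lt hN (hidem x)).le
    _ ≤ Fintype.card M * N := Nat.mul_le_mul_right N (Finset.card_le_univ _)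

theorem exists_forall_isIdempotentElem_pow_of_EB_ne_top (h : EB M ≠ ⊤) :
    ∃ N, 0 < N ∧ ∀ x : M, IsIdempotentElem (x ^ N) := by
  obtain ⟨n, hn⟩ := EB_ne_top_iff.mp h
  refine ⟨n.factorial, n.factorial_pos, fun x => ?_⟩
  obtain ⟨k, hk0, hkn, hk⟩ := exists_isIdempotentElem_pow_of_not_idemProdFree_replicate
    fun hfree => (hn _ hfree).ne (List.length_replicate ..)
  obtain ⟨c, hc⟩ := Nat.dvd_factorial hk0 hkn
  rw [hc, pow_mul]
  exact hk.pow c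

end Monoid

theorem finite_of_forall_isIdempotentElem_pow_of_isDomain {K : Type*} [CommRing K] [IsDomain K]
    {N : ℕ} (hN : 0 < N) (h : ∀ x : K, IsIdempotentElem (x ^ N)) : Finite K := by
  classical
  refine Set.finite_univ_iff.mp
    ((insert 0 (Polynomial.nthRoots N (1 : K)).toFinset).finite_toSet.subset fun x _ => ?_)
  rcases IsIdempotentElem.iff_eq_zero_or_one.mp (h x) with hx | hx
  · simp [pow_eq_zero_iff hN.ne' |>.mp hx]
  · simp [Polynomial.mem_nthRoots hN, hx]

theorem finite_of_forall_finite_quotient_minimalPrimes {R : Type*} [CommRing R]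
    [IsNoetherianRing R] (h : ∀ p ∈ minimalPrimes R, Finite (R ⧸ p)) : Finite R := by
  have hfin := minimalPrimes.finite_of_isNoetherianRing R
  set P := ∏ p ∈ hfin.toFinset, p
  have hPnil : P ≤ nilradical R := calc
    P ≤ hfin.toFinset.inf id := Ideal.prod_le_inf
    _ = sInf (minimalPrimes R) := by rw [Finset.inf_id_eq_sInf, hfin.coe_toFinset]
    _ = nilradical R := Ideal.sInf_minimalPrimes
  obtain ⟨k, hk⟩ := IsNoetherianRing.isNilpotent_nilradical R
  have hPk : P ^ k = ⊥ := le_bot_iff.mp ((Ideal.pow_right_mono hPnil k).trans hk.le)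
  have : Finite (R ⧸ P) := Ideal.finite_quotient_prod _ _ (fun p _ => IsNoetherian.noetherian p)
    fun p hp => h p ((Set.Finite.mem_toFinset _).mp hp)
  have := Ideal.finite_quotient_pow (IsNoetherian.noetherian P) k
  rw [hPk] at this
  exact .of_equiv _ (RingEquiv.quotientBot R).toEquiv

theorem finite_of_forall_isIdempotentElem_pow {R : Type*} [CommRing R] [IsNoetherianRing R]
    {N : ℕ} (hN : 0 < N) (h : ∀ x : R, IsIdempotentElem (x ^ N)) : Finite R := by
  refine finite_of_forall_finite_quotient_minimalPrimes fun p hp => ?_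
  have := hp.1.1
  refine finite_of_forall_isIdempotentElem_pow_of_isDomain hN fun x => ?_
  obtain ⟨y, rfl⟩ := Ideal.Quotient.mk_surjective x
  simpa using (h y).map (Ideal.Quotient.mk p)

theorem stmt_17 (R : Type*) [CommRing R] [IsNoetherianRing R] :
    EB R ≠ ⊤ ↔ Finite R := by
  refine ⟨fun h => ?_, fun _ => EB_ne_top_of_finite⟩
  obtain ⟨N, hN, hidem⟩ := exists_forall_isIdempotentElem_pow_of_EB_ne_top h
  exact finite_of_forall_isIdempotentElem_pow hN hidem
end
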